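/- Theorem 1 (uniqueness of the K-Shapley value): let ρ be a map assigning to every K-restricted cooperative game V on [M] a vector ρ(V) ∈ ℝ^M, and suppose ρ is ℝ-linear in V and satisfies symmetry, the null player property, and K-efficiency. Then ρ coincides with the K-Shapley value: ρ_i(V) = φ_i^K(V) for every K-restricted game V and every player i ∈ [M]. -/

import Mathlib

open Finset

lemma key_nat (n t : ℕ) (ht : 1 ≤ t) :
    t * ∑ j ∈ range (n+1), n.choose j * ((j + t - 1).factorial * (n - j).factorial)
      = (n + t).factorial := by
  have hstep : ∀ j ∈ range (n+1),
      n.choose j * ((j + t - 1).factorial * (n - j).factorial)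
        = n.factorial * (t-1).factorial * (j + t - 1).choose (t-1) := by
    intro j hj
    rw [mem_range, Nat.lt_succ_iff] at hj
    have h1 : (j + t - 1).choose (t-1) * (t-1).factorial * (j + t - 1 - (t-1)).factorial
        = (j + t - 1).factorial := Nat.choose_mul_factorial_mul_factorial (by omega)
    have h2 : j + t - 1 - (t-1) = j := by omega
    rw [h2] at h1
    have h3 : n.choose j * j.factorial * (n - j).factorial = n.factorial :=
      Nat.choose_mul_factorial_mul_factorial hj
    calc n.choose j * ((j + t - 1).factorial * (n - j).factorial)
        = n.choose j * (((j + t - 1).choose (t-1) * (t-1).factorial * j.factorial) * (n - j).factorial) := by rw [h1]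
      _ = (n.choose j * j.factorial * (n - j).factorial) * (t-1).factorial * (j + t - 1).choose (t-1) := by ring
      _ = n.factorial * (t-1).factorial * (j + t - 1).choose (t-1) := by rw [h3]
  rw [Finset.sum_congr rfl hstep, ← Finset.mul_sum]
  have hhs : ∑ j ∈ range (n+1), (j + t - 1).choose (t-1) = (n + t).choose t := by
    have : ∑ j ∈ range (n+1), (j + t - 1).choose (t-1)
        = ∑ m ∈ Icc (t-1) (n + t - 1), m.choose (t-1) := by
      apply Finset.sum_nbij' (fun j => j + (t-1)) (fun m => m - (t-1))
      · intro a ha; rw [mem_range, Nat.lt_succ_iff] at ha; rw [mem_Icc]; omega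
      · intro a ha; rw [mem_Icc] at ha; rw [mem_range]; omega
      · intro a _; omega
      · intro a ha; rw [mem_Icc] at ha; omega
      · intro a _; congr 1; omega
    rw [this, Nat.sum_Icc_choose]
    congr 1 <;> omega
  rw [hhs]
  have h4 : (n + t).choose t * t.factorial * n.factorial = (n + t).factorial := by
    have := Nat.choose_mul_factorial_mul_factorial (Nat.le_add_left t n)
    simpa using this
  have h5 : t * (t-1).factorial = t.factorial := by
    have : t = (t-1) + 1 := by omega
    rw [this]; simp [Nat.factorial_succ]
  calc t * (n.factorial * (t-1).factorial * (n + t).choose t)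
      = (n + t).choose t * (t * (t-1).factorial) * n.factorial := by ring
    _ = (n + t).factorial := by rw [h5, h4]

lemma sum_powerset_superset {α : Type*} [DecidableEq α] {A B : Finset α} (hAB : A ⊆ B)
    (f : Finset α → ℝ) :
    ∑ S ∈ B.powerset.filter (fun S => A ⊆ S), f S = ∑ U ∈ (B \ A).powerset, f (A ∪ U) := by
  apply Finset.sum_nbij' (fun S => S \ A) (fun U => A ∪ U)
  · intro S hS
    rw [mem_filter, mem_powerset] at hS
    rw [mem_powerset]
    exact sdiff_subset_sdiff hS.1 Subset.rfl
  · intro U hU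
    rw [mem_powerset] at hU
    rw [mem_filter, mem_powerset]
    constructor
    · exact union_subset hAB ((subset_sdiff.mp hU).1)
    · exact subset_union_left
  · intro S hS
    rw [mem_filter] at hS
    exact union_sdiff_of_subset hS.2
  · intro U hU
    rw [mem_powerset, subset_sdiff] at hU
    rw [union_sdiff_left, _root_.sdiff_eq_self_iff_disjoint.mpr hU.2.symm]
  · intro S hS
    rw [mem_filter] at hS
    rw [union_sdiff_of_subset hS.2]

lemma kshap_inner_sum {α : Type*} [DecidableEq α] (K t : ℕ) (ht : 1 ≤ t) (htK : t ≤ K)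
    {A B : Finset α} (hAB : A ⊆ B) (hA : A.card = t - 1) (hB : B.card = K - 1) :
    ∑ S ∈ B.powerset.filter (fun S => A ⊆ S),
      ((S.card.factorial * (K - S.card - 1).factorial : ℕ) : ℝ) / (K.factorial : ℝ)
      = 1 / t := by
  rw [sum_powerset_superset hAB]
  have hcard : ∀ U ∈ (B \ A).powerset, (A ∪ U).card = A.card + U.card := by
    intro U hU
    rw [mem_powerset, subset_sdiff] at hU
    exact card_union_of_disjoint hU.2.symm
  rw [Finset.sum_congr rfl (fun U hU => by rw [hcard U hU])]
  rw [Finset.sum_powerset_apply_card (fun m => ((((A.card + m).factorial * (K - (A.card + m) - 1).factorial : ℕ) : ℝ) / (K.factorial : ℝ)))]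
  have hn : (B \ A).card = K - t := by
    rw [card_sdiff_of_subset hAB, hA, hB]; omega
  rw [hn, hA]
  set n := K - t with hnd
  have hKnt : K = n + t := by omega
  -- each summand: choose n m • ((m + t - 1)! * (n - m)!)/K!
  have hterm : ∀ m ∈ range (n + 1),
      (n.choose m) • ((((t - 1 + m).factorial * (K - (t - 1 + m) - 1).factorial : ℕ) : ℝ) / (K.factorial : ℝ))
      = ((n.choose m * ((m + t - 1).factorial * (n - m).factorial) : ℕ) : ℝ) / (K.factorial : ℝ) := by
    intro m hm
    rw [mem_range, Nat.lt_succ_iff] at hm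
    have e1 : t - 1 + m = m + t - 1 := by omega
    have e2 : K - (m + t - 1) - 1 = n - m := by omega
    rw [e1, e2, nsmul_eq_mul]
    push_cast
    ring
  rw [Finset.sum_congr rfl hterm, ← Finset.sum_div, ← Nat.cast_sum]
  have hkey : t * (∑ m ∈ range (n+1), n.choose m * ((m + t - 1).factorial * (n - m).factorial)) = K.factorial := by
    rw [key_nat n t ht, hKnt]
  have hkeyR : (t : ℝ) * ((∑ m ∈ range (n+1), n.choose m * ((m + t - 1).factorial * (n - m).factorial) : ℕ) : ℝ) = (K.factorial : ℝ) := by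
    exact_mod_cast congrArg (Nat.cast : ℕ → ℝ) hkey
  have ht0 : (t : ℝ) ≠ 0 := by positivity
  have hK0 : (K.factorial : ℝ) ≠ 0 := by positivity
  field_simp
  push_cast at hkeyR
  push_cast
  linarith [hkeyR]

lemma count_supersets {M : ℕ} (K : ℕ) (T : Finset (Fin M)) (htK : T.card ≤ K) :
    ((Finset.powersetCard K (Finset.univ : Finset (Fin M))).filter (fun S => T ⊆ S)).card
      = (M - T.card).choose (K - T.card) := by
  have : ((Finset.powersetCard K (Finset.univ : Finset (Fin M))).filter (fun S => T ⊆ S)).card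
      = (Finset.powersetCard (K - T.card) Tᶜ).card := by
    apply Finset.card_nbij' (fun S => S \ T) (fun U => T ∪ U)
    · intro S hS
      rw [mem_coe, mem_filter, mem_powersetCard] at hS
      rw [mem_coe, mem_powersetCard]
      refine ⟨fun x hx => ?_, ?_⟩
      · rw [mem_compl]; exact (mem_sdiff.mp hx).2
      · rw [card_sdiff_of_subset hS.2, hS.1.2]
    · intro U hU
      rw [mem_coe, mem_powersetCard] at hU
      rw [mem_coe, mem_filter, mem_powersetCard]
      have hd : Disjoint T U := by
        rw [disjoint_iff_ne]
        intro a ha b hb hab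
        exact (mem_compl.mp (hU.1 hb)) (hab ▸ ha)
      refine ⟨⟨subset_univ _, ?_⟩, subset_union_left⟩
      rw [card_union_of_disjoint hd, hU.2]
      omega
    · intro S hS
      rw [mem_coe, mem_filter] at hS
      exact union_sdiff_of_subset hS.2
    · intro U hU
      rw [mem_coe, mem_powersetCard] at hU
      have hd : Disjoint T U := by
        rw [disjoint_iff_ne]
        intro a ha b hb hab
        exact (mem_compl.mp (hU.1 hb)) (hab ▸ ha)
      beta_reduce
      rw [union_sdiff_left, _root_.sdiff_eq_self_iff_disjoint.mpr hd]
  rw [this, card_powersetCard, card_compl, Fintype.card_fin]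

lemma mobius_finset {α : Type*} [DecidableEq α] (g : Finset α → ℝ) (S : Finset α) :
    ∑ T ∈ S.powerset, ∑ R ∈ T.powerset, (-1:ℝ)^(T.card - R.card) * g R = g S := by
  have h1 : ∀ T ∈ S.powerset, ∑ R ∈ T.powerset, (-1:ℝ)^(T.card - R.card) * g R
      = ∑ R ∈ S.powerset, if R ⊆ T then (-1:ℝ)^(T.card - R.card) * g R else 0 := by
    intro T hT
    rw [mem_powerset] at hT
    rw [← Finset.sum_filter]
    congr 1
    ext R
    simp only [mem_filter, mem_powerset]
    exact ⟨fun h => ⟨h.trans hT, h⟩, fun h => h.2⟩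
  rw [Finset.sum_congr rfl h1, Finset.sum_comm]
  have h2 : ∀ R ∈ S.powerset,
      (∑ T ∈ S.powerset, if R ⊆ T then (-1:ℝ)^(T.card - R.card) * g R else 0)
        = (if S \ R = ∅ then 1 else 0) * g R := by
    intro R hR
    rw [mem_powerset] at hR
    rw [← Finset.sum_filter, sum_powerset_superset hR]
    have hc : ∀ U ∈ (S \ R).powerset, (-1:ℝ)^((R ∪ U).card - R.card) * g R = (-1:ℝ)^U.card * g R := by
      intro U hU
      rw [mem_powerset, subset_sdiff] at hU
      rw [card_union_of_disjoint hU.2.symm]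
      congr 2
      omega
    rw [Finset.sum_congr rfl hc, ← Finset.sum_mul]
    congr 1
    have hz := Finset.sum_powerset_neg_one_pow_card (x := S \ R)
    calc ∑ U ∈ (S\R).powerset, (-1:ℝ)^U.card
        = ((∑ U ∈ (S\R).powerset, (-1:ℤ)^U.card : ℤ) : ℝ) := by push_cast; rfl
      _ = _ := by rw [hz]; split <;> simp
  rw [Finset.sum_congr rfl h2]
  have h3 : ∀ R ∈ S.powerset, (if S \ R = ∅ then (1:ℝ) else 0) * g R = if R = S then g R else 0 := by
    intro R hR
    rw [mem_powerset] at hR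
    by_cases h : R = S
    · subst h; simp
    · have hne : S \ R ≠ ∅ := by
        rw [Ne, sdiff_eq_empty_iff_subset]
        exact fun hSR => h (Subset.antisymm hR hSR)
      simp [h, hne]
  rw [Finset.sum_congr rfl h3, Finset.sum_ite_eq' S.powerset S g]
  simp

/-- The `K`-Shapley value of player `i` in a `K`-restricted cooperative game `V` on `[M]`. -/
noncomputable def KShapley (M K : ℕ) (V : Finset (Fin M) → ℝ) (i : Fin M) : ℝ :=
  (1 / ((M - 1).choose (K - 1) : ℝ)) *
    ∑ SK ∈ Finset.filter (fun SK => i ∈ SK)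
        (Finset.powersetCard K (Finset.univ : Finset (Fin M))),
      ∑ S ∈ (SK.erase i).powerset,
        ((S.card.factorial * (K - S.card - 1).factorial : ℕ) : ℝ) / (K.factorial : ℝ) *
          (V (insert i S) - V S)

-- facts about the index sets
lemma kshap_facts {M K : ℕ} {i : Fin M} {SK S : Finset (Fin M)}
    (hSK : SK ∈ Finset.filter (fun SK => i ∈ SK) (Finset.powersetCard K (Finset.univ : Finset (Fin M))))
    (hS : S ∈ (SK.erase i).powerset) :
    i ∉ S ∧ S.card + 1 ≤ K ∧ (insert i S).card = S.card + 1 := by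
  rw [mem_filter, mem_powersetCard] at hSK
  rw [mem_powerset] at hS
  have hiS : i ∉ S := fun h => (mem_erase.mp (hS h)).1 rfl
  have hcard : S.card ≤ (SK.erase i).card := card_le_card hS
  rw [card_erase_of_mem hSK.2, hSK.1.2] at hcard
  have hK1 : 1 ≤ K := by
    have := card_pos.mpr ⟨i, hSK.2⟩
    omega
  exact ⟨hiS, by omega, card_insert_of_notMem hiS⟩

lemma KShapley_congr {M K : ℕ} (V W : Finset (Fin M) → ℝ) (i : Fin M)
    (h : ∀ S : Finset (Fin M), S.card ≤ K → V S = W S) :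
    KShapley M K V i = KShapley M K W i := by
  unfold KShapley
  congr 1
  refine Finset.sum_congr rfl fun SK hSK => Finset.sum_congr rfl fun S hS => ?_
  obtain ⟨h1, h2, h3⟩ := kshap_facts hSK hS
  rw [h (insert i S) (by omega), h S (by omega)]

lemma KShapley_sum (M K : ℕ) {ι : Type*} (A : Finset ι) (c : ι → ℝ)
    (u : ι → Finset (Fin M) → ℝ) (i : Fin M) :
    KShapley M K (fun S => ∑ T ∈ A, c T * u T S) i
      = ∑ T ∈ A, c T * KShapley M K (u T) i := by
  unfold KShapley
  have h1 : ∀ SK ∈ Finset.filter (fun SK => i ∈ SK)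
      (Finset.powersetCard K (Finset.univ : Finset (Fin M))),
      ∑ S ∈ (SK.erase i).powerset,
        ((S.card.factorial * (K - S.card - 1).factorial : ℕ) : ℝ) / (K.factorial : ℝ) *
          ((∑ T ∈ A, c T * u T (insert i S)) - ∑ T ∈ A, c T * u T S)
      = ∑ T ∈ A, ∑ S ∈ (SK.erase i).powerset,
          c T * (((S.card.factorial * (K - S.card - 1).factorial : ℕ) : ℝ) / (K.factorial : ℝ) *
            (u T (insert i S) - u T S)) := by
    intro SK _
    rw [Finset.sum_comm]
    refine Finset.sum_congr rfl fun S _ => ?_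
    rw [← Finset.sum_sub_distrib, Finset.mul_sum]
    exact Finset.sum_congr rfl fun T _ => by ring
  rw [Finset.sum_congr rfl h1, Finset.sum_comm, Finset.mul_sum]
  refine Finset.sum_congr rfl fun T _ => ?_
  simp only [← Finset.mul_sum]
  ring

/-- truncated unanimity game -/
noncomputable def uGame (M K : ℕ) (T : Finset (Fin M)) : Finset (Fin M) → ℝ :=
  fun S => if T ⊆ S ∧ S.card ≤ K then 1 else 0

lemma uGame_insert_eq {M K : ℕ} {T : Finset (Fin M)} {i : Fin M} (hiT : i ∉ T) (hK : 1 ≤ K)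
    {S : Finset (Fin M)} (hiS : i ∉ S) (hS : S.card ≤ K - 1) :
    uGame M K T (insert i S) = uGame M K T S := by
  unfold uGame
  have h1 : T ⊆ insert i S ↔ T ⊆ S := by
    constructor
    · intro h x hx
      rcases mem_insert.mp (h hx) with h' | h'
      · exact absurd (h' ▸ hx) hiT
      · exact h'
    · intro h; exact h.trans (subset_insert i S)
  have h2 : (insert i S).card = S.card + 1 := card_insert_of_notMem hiS
  have h3 : (insert i S).card ≤ K := by omega
  have h4 : S.card ≤ K := by omega
  simp [h1, h3, h4]

lemma KShapley_uGame_not_mem {M K : ℕ} {T : Finset (Fin M)} {i : Fin M} (hiT : i ∉ T) :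
    KShapley M K (uGame M K T) i = 0 := by
  unfold KShapley
  rw [mul_eq_zero]
  right
  refine Finset.sum_eq_zero fun SK hSK => Finset.sum_eq_zero fun S hS => ?_
  obtain ⟨h1, h2, _⟩ := kshap_facts hSK hS
  rw [uGame_insert_eq hiT (by omega) h1 (by omega), sub_self, mul_zero]

lemma KShapley_uGame_mem {M K : ℕ} (hK : 1 ≤ K) {T : Finset (Fin M)} {i : Fin M} (hiT : i ∈ T)
    (hTK : T.card ≤ K) :
    KShapley M K (uGame M K T) i
      = (1 / ((M - 1).choose (K - 1) : ℝ)) * ((M - T.card).choose (K - T.card) : ℝ) * (1 / (T.card : ℝ)) := by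
  unfold KShapley
  have ht1 : 1 ≤ T.card := card_pos.mpr ⟨i, hiT⟩
  have hinner : ∀ SK ∈ Finset.filter (fun SK => i ∈ SK)
      (Finset.powersetCard K (Finset.univ : Finset (Fin M))),
      ∑ S ∈ (SK.erase i).powerset,
        ((S.card.factorial * (K - S.card - 1).factorial : ℕ) : ℝ) / (K.factorial : ℝ) *
          (uGame M K T (insert i S) - uGame M K T S)
      = if T ⊆ SK then 1 / (T.card : ℝ) else 0 := by
    intro SK hSK
    have hSK' := hSK
    rw [mem_filter, mem_powersetCard] at hSK'
    have step : ∀ S ∈ (SK.erase i).powerset,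
        ((S.card.factorial * (K - S.card - 1).factorial : ℕ) : ℝ) / (K.factorial : ℝ) *
          (uGame M K T (insert i S) - uGame M K T S)
        = if T.erase i ⊆ S then
            ((S.card.factorial * (K - S.card - 1).factorial : ℕ) : ℝ) / (K.factorial : ℝ) else 0 := by
      intro S hS
      obtain ⟨h1, h2, h3⟩ := kshap_facts hSK hS
      have hTS : ¬ (T ⊆ S) := fun h => h1 (h hiT)
      have hu1 : uGame M K T S = 0 := by simp [uGame, hTS]
      have hu2 : uGame M K T (insert i S) = if T.erase i ⊆ S then 1 else 0 := by
        unfold uGame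
        have hc : (insert i S).card ≤ K := by omega
        simp only [subset_insert_iff, hc, and_true]
      rw [hu1, hu2]
      by_cases h : T.erase i ⊆ S <;> simp [h]
    rw [Finset.sum_congr rfl step, ← Finset.sum_filter]
    by_cases hT : T ⊆ SK
    · rw [if_pos hT]
      have hAB : T.erase i ⊆ SK.erase i := erase_subset_erase i hT
      exact kshap_inner_sum K T.card ht1 hTK hAB
        (by rw [card_erase_of_mem hiT]) (by rw [card_erase_of_mem hSK'.2, hSK'.1.2])
    · rw [if_neg hT]
      apply Finset.sum_eq_zero
      intro S hS
      rw [mem_filter, mem_powerset] at hS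
      exfalso
      apply hT
      intro x hx
      by_cases hxi : x = i
      · exact hxi ▸ hSK'.2
      · exact (erase_subset i SK) (hS.1 (hS.2 (mem_erase.mpr ⟨hxi, hx⟩)))
  rw [Finset.sum_congr rfl hinner, ← Finset.sum_filter, Finset.filter_filter]
  have hfe : Finset.filter (fun SK => i ∈ SK ∧ T ⊆ SK)
      (Finset.powersetCard K (Finset.univ : Finset (Fin M)))
      = Finset.filter (fun SK => T ⊆ SK) (Finset.powersetCard K (Finset.univ : Finset (Fin M))) := by
    apply Finset.filter_congr
    intro SK _
    exact ⟨fun h => h.2, fun h => ⟨h hiT, h⟩⟩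
  rw [hfe, Finset.sum_const, count_supersets K T hTK, nsmul_eq_mul]
  ring

/-- Theorem 1 -/
theorem kshapley_unique (M K : ℕ) (hM : 1 ≤ M) (hK1 : 1 ≤ K) (hKM : K ≤ M)
    (ρ : (Finset (Fin M) → ℝ) → Fin M → ℝ)
    (hlin : ∀ V₁ V₂ : Finset (Fin M) → ℝ, V₁ ∅ = 0 → V₂ ∅ = 0 → ∀ c₁ c₂ : ℝ, ∀ i : Fin M,
      ρ (fun S => c₁ * V₁ S + c₂ * V₂ S) i = c₁ * ρ V₁ i + c₂ * ρ V₂ i)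
    (hsym : ∀ V : Finset (Fin M) → ℝ, V ∅ = 0 → ∀ i j : Fin M,
      (∀ S : Finset (Fin M), i ∉ S → j ∉ S → S.card ≤ K - 1 →
        V (insert i S) = V (insert j S)) → ρ V i = ρ V j)
    (hnull : ∀ V : Finset (Fin M) → ℝ, V ∅ = 0 → ∀ i : Fin M,
      (∀ S : Finset (Fin M), i ∉ S → S.card ≤ K - 1 → V (insert i S) = V S) → ρ V i = 0)
    (heff : ∀ V : Finset (Fin M) → ℝ, V ∅ = 0 →
      ∑ i : Fin M, ρ V i
        = (1 / ((M - 1).choose (K - 1) : ℝ)) *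
            ∑ T ∈ Finset.powersetCard K (Finset.univ : Finset (Fin M)), V T)
    (V : Finset (Fin M) → ℝ) (hV0 : V ∅ = 0) (i : Fin M) :
    ρ V i = KShapley M K V i := by
  classical
  set V' : Finset (Fin M) → ℝ := fun S => if S.card ≤ K then V S else 0 with hV'
  have hV'0 : V' ∅ = 0 := by simp [hV', hV0]
  have hρ0 : ∀ j : Fin M, ρ (fun _ => (0:ℝ)) j = 0 :=
    fun j => hnull (fun _ => 0) rfl j (fun S _ _ => rfl)
  have hD0 : (fun S => V S - V' S) ∅ = 0 := by simp [hV'0, hV0]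
  have step1 : ρ V i = ρ V' i := by
    have h := hlin V' (fun S => V S - V' S) hV'0 hD0 1 1 i
    have he : (fun S => 1 * V' S + 1 * (V S - V' S)) = V := by funext S; ring
    rw [he] at h
    have hz : ρ (fun S => V S - V' S) i = 0 := by
      apply hnull _ hD0
      intro S hiS hScard
      have h1 : (insert i S).card ≤ K := by
        rw [card_insert_of_notMem hiS]; omega
      have h2 : S.card ≤ K := by omega
      simp [hV', h1, h2]
    rw [hz] at h
    linarith
  have step1' : KShapley M K V i = KShapley M K V' i := by
    apply KShapley_congr
    intro S hS
    simp [hV', hS]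
  set A : Finset (Finset (Fin M)) := (univ : Finset (Fin M)).powerset.erase ∅ with hA
  set cc : Finset (Fin M) → ℝ :=
    fun T => ∑ R ∈ T.powerset, (-1:ℝ)^(T.card - R.card) * V' R with hcc
  have hdecomp : ∀ S : Finset (Fin M), V' S = ∑ T ∈ A, cc T * uGame M K T S := by
    intro S
    by_cases hS : S.card ≤ K
    · have hstep : ∀ T ∈ A, cc T * uGame M K T S = if T ⊆ S then cc T else 0 := by
        intro T _
        unfold uGame
        by_cases h : T ⊆ S <;> simp [h, hS]
      rw [Finset.sum_congr rfl hstep, ← Finset.sum_filter]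
      have hfil : A.filter (fun T => T ⊆ S) = S.powerset.erase ∅ := by
        ext T
        simp only [hA, mem_filter, mem_erase, mem_powerset]
        exact ⟨fun h => ⟨h.1.1, h.2⟩, fun h => ⟨⟨h.1, subset_univ T⟩, h.2⟩⟩
      rw [hfil]
      have hce : cc ∅ = 0 := by simp [hcc, hV'0]
      rw [Finset.sum_erase _ hce]
      exact (mobius_finset V' S).symm
    · have h0 : V' S = 0 := by simp [hV', hS]
      rw [h0]
      symm
      apply Finset.sum_eq_zero
      intro T _
      have : uGame M K T S = 0 := by simp [uGame, hS]
      rw [this, mul_zero]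
  have hu0 : ∀ T ∈ A, uGame M K T ∅ = 0 := by
    intro T hT
    rw [hA, mem_erase] at hT
    have : ¬ (T ⊆ ∅) := fun h => hT.1 (subset_empty.mp h)
    simp [uGame, this]
  -- linearity of ρ over finite sums
  have hρsum : ∀ (B : Finset (Finset (Fin M))), B ⊆ A →
      ρ (fun S => ∑ T ∈ B, cc T * uGame M K T S) i = ∑ T ∈ B, cc T * ρ (uGame M K T) i := by
    intro B
    induction B using Finset.induction_on with
    | empty =>
      intro _
      simp only [Finset.sum_empty]
      exact hρ0 i
    | insert a B haB ih =>
      intro hBA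
      have haA : a ∈ A := hBA (mem_insert_self a B)
      have hBA' : B ⊆ A := (subset_insert a B).trans hBA
      have hsum0 : (fun S => ∑ T ∈ B, cc T * uGame M K T S) ∅ = 0 := by
        simp only
        apply Finset.sum_eq_zero
        intro T hT
        rw [hu0 T (hBA' hT), mul_zero]
      have h := hlin (uGame M K a) (fun S => ∑ T ∈ B, cc T * uGame M K T S)
        (hu0 a haA) hsum0 (cc a) 1 i
      have he : (fun S => cc a * uGame M K a S + 1 * ∑ T ∈ B, cc T * uGame M K T S)
          = (fun S => ∑ T ∈ insert a B, cc T * uGame M K T S) := by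
        funext S
        rw [Finset.sum_insert haB]
        ring
      rw [he] at h
      rw [h, ih hBA', Finset.sum_insert haB, one_mul]
  -- per-basis-game equality
  have hper : ∀ T ∈ A, ρ (uGame M K T) i = KShapley M K (uGame M K T) i := by
    intro T hTA
    have hTA' := hTA
    rw [hA, mem_erase, mem_powerset] at hTA'
    by_cases hTbig : K < T.card
    · have hzero : uGame M K T = fun _ => (0:ℝ) := by
        funext S
        unfold uGame
        have : ¬(T ⊆ S ∧ S.card ≤ K) := by
          rintro ⟨h1, h2⟩
          have := card_le_card h1
          omega
        simp [this]
      rw [hzero, hρ0 i]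
      have : KShapley M K (fun _ => (0:ℝ)) i = 0 := by simp [KShapley]
      rw [this]
    · push_neg at hTbig
      by_cases hiT : i ∈ T
      · -- main case
        rw [KShapley_uGame_mem hK1 hiT hTbig]
        have ht1 : 1 ≤ T.card := card_pos.mpr ⟨i, hiT⟩
        have hnullj : ∀ j : Fin M, j ∉ T → ρ (uGame M K T) j = 0 := by
          intro j hjT
          apply hnull _ (hu0 T hTA) j
          intro S hjS hc
          exact uGame_insert_eq hjT hK1 hjS hc
        have hval : ∀ j ∈ T, ρ (uGame M K T) j = ρ (uGame M K T) i := by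
          intro j hj
          by_cases hji : j = i
          · rw [hji]
          · apply hsym _ (hu0 T hTA) j i
            intro S hjS hiS hcS
            have e1 : uGame M K T (insert j S) = 0 := by
              have : ¬ T ⊆ insert j S := by
                intro h
                rcases mem_insert.mp (h hiT) with h' | h'
                · exact hji h'.symm
                · exact hiS h'
              simp [uGame, this]
            have e2 : uGame M K T (insert i S) = 0 := by
              have : ¬ T ⊆ insert i S := by
                intro h
                rcases mem_insert.mp (h hj) with h' | h'
                · exact hji h'
                · exact hjS h'
              simp [uGame, this]
            rw [e1, e2]
        have hsumT : ∑ j : Fin M, ρ (uGame M K T) j = (T.card : ℝ) * ρ (uGame M K T) i := by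
          rw [← Finset.sum_subset (subset_univ T) (fun j _ hjT => hnullj j hjT)]
          rw [Finset.sum_congr rfl hval, Finset.sum_const, nsmul_eq_mul]
        have he := heff (uGame M K T) (hu0 T hTA)
        have hsum2 : ∑ Tk ∈ Finset.powersetCard K (Finset.univ : Finset (Fin M)), uGame M K T Tk
            = ((M - T.card).choose (K - T.card) : ℝ) := by
          have hstep : ∀ SK ∈ Finset.powersetCard K (Finset.univ : Finset (Fin M)),
              uGame M K T SK = if T ⊆ SK then (1:ℝ) else 0 := by
            intro SK hSK
            rw [mem_powersetCard] at hSK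
            unfold uGame
            simp [hSK.2]
          rw [Finset.sum_congr rfl hstep, Finset.sum_boole, count_supersets K T hTbig]
        rw [hsumT, hsum2] at he
        have ht0 : (T.card : ℝ) ≠ 0 := by exact_mod_cast (show T.card ≠ 0 by omega)
        have hC0 : (0:ℝ) < ((M - 1).choose (K - 1) : ℝ) := by
          exact_mod_cast Nat.choose_pos (by omega)
        field_simp at he ⊢
        linear_combination he
      · rw [KShapley_uGame_not_mem hiT]
        apply hnull _ (hu0 T hTA) i
        intro S hiS hc
        exact uGame_insert_eq hiT hK1 hiS hc
  calc ρ V i = ρ V' i := step1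
    _ = ρ (fun S => ∑ T ∈ A, cc T * uGame M K T S) i := by
        congr 1
        funext S
        exact hdecomp S
    _ = ∑ T ∈ A, cc T * ρ (uGame M K T) i := hρsum A Subset.rfl
    _ = ∑ T ∈ A, cc T * KShapley M K (uGame M K T) i :=
        Finset.sum_congr rfl fun T hT => by rw [hper T hT]
    _ = KShapley M K (fun S => ∑ T ∈ A, cc T * uGame M K T S) i := (KShapley_sum M K A cc _ i).symm
    _ = KShapley M K V' i := by
        congr 1
        funext S
        exact (hdecomp S).symm
    _ = KShapley M K V i := step1'.symm
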